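/- The Bernoulli regression model with adaptive Gumbel link is identifiable in (η, α): if for all real η, σ_α(η) = σ_{α'}(η) where σ_α(η) = 1 - (1 + α e^η)^{-1/α}, then the success-probability maps coincide only when α = α'; moreover for fixed α the map η ↦ σ_α(η) is injective. -/

import Mathlib

noncomputable def adaGumbel (α x : ℝ) : ℝ := 1 - (1 + α * Real.exp x) ^ (-(1/α))

/-!
Writing `1 - σ_α(η) = exp (-log (1 + α eᶯ) / α)`, both claims reduce to the monotonicity of
`log (1 + α t) / α = t · log (1 + α t) / (α t)` with `t = eᶯ > 0`: it increases in `η`, and it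
strictly decreases in `α` because `log (1 + x) / x` is a secant slope of the strictly concave
logarithm at `1`. Hence `σ_α(η)` is strictly increasing in `η` and strictly decreasing in `α`,
so a single value `η` already determines `α`.
-/

open Real Set

theorem strictAntiOn_log_one_add_div_self :
    StrictAntiOn (fun x : ℝ => log (1 + x) / x) (Ioi 0) := by
  intro x hx y hy hxy
  have hx : 0 < x := hx
  have hy : 0 < y := hy
  have key := strictConcaveOn_log_Ioi.secant_strict_mono (a := 1) (x := 1 + x) (y := 1 + y)
    (mem_Ioi.mpr one_pos) (mem_Ioi.mpr (by linarith)) (mem_Ioi.mpr (by linarith))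
    (by linarith) (by linarith) (by linarith)
  simpa only [log_one, sub_zero, add_sub_cancel_left] using key

theorem strictMono_one_sub_exp_neg : StrictMono fun h : ℝ => 1 - exp (-h) := fun _ _ h => by
  simpa using exp_lt_exp.mpr (neg_lt_neg h)

theorem adaGumbel_eq_one_sub_exp {α : ℝ} (hα : 0 < α) (x : ℝ) :
    adaGumbel α x = 1 - exp (-(log (1 + α * exp x) / α)) := by
  rw [adaGumbel, rpow_def_of_pos (by positivity)]
  ring_nf

theorem strictAntiOn_adaGumbel (x : ℝ) : StrictAntiOn (fun α => adaGumbel α x) (Ioi 0) := by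
  intro α hα β hβ hαβ
  have hα : 0 < α := hα
  have hβ : 0 < β := hβ
  have ht := exp_pos x
  have rescale : ∀ γ : ℝ, 0 < γ →
      log (1 + γ * exp x) / γ = exp x * (log (1 + γ * exp x) / (γ * exp x)) := by
    intro γ hγ
    field_simp
  have hslope := strictAntiOn_log_one_add_div_self (mul_pos hα ht) (mul_pos hβ ht)
    (mul_lt_mul_of_pos_right hαβ ht)
  simp only [adaGumbel_eq_one_sub_exp hα, adaGumbel_eq_one_sub_exp hβ]
  refine strictMono_one_sub_exp_neg ?_
  rw [rescale α hα, rescale β hβ]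
  exact mul_lt_mul_of_pos_left hslope ht

theorem strictMono_adaGumbel {α : ℝ} (hα : 0 < α) : StrictMono (adaGumbel α) := by
  intro x y hxy
  simp only [adaGumbel_eq_one_sub_exp hα]
  refine strictMono_one_sub_exp_neg (div_lt_div_of_pos_right ?_ hα)
  refine log_lt_log (by positivity) ?_
  gcongr

theorem stmt19 :
    (∀ α α' : ℝ, 0 < α → 0 < α' →
      (∀ η : ℝ, adaGumbel α η = adaGumbel α' η) → α = α') ∧
    (∀ α : ℝ, 0 < α → Function.Injective (adaGumbel α)) :=
  ⟨fun _ _ hα hα' h => (strictAntiOn_adaGumbel 0).injOn hα hα' (h 0),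
    fun _ hα => (strictMono_adaGumbel hα).injective⟩
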